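/- Let f(x) = Σ_i l_i x_i + Σ_{i<j} q_{ij} x_i x_j (mod 2) be a quadratic Boolean function on Z_2^n, and suppose vectors p_1, …, p_n ∈ Z_2^N satisfy p_i · p_j = q_{ij} (mod 2) for all i < j and W(p_i) = 0 (mod 2) for all i. Then for every x ∈ Z_2^n, Σ_{i<j} (p_i · p_j) x_i x_j = Σ_{i<j} q_{ij} x_i x_j (mod 2) and Π_{i} Q(p_i x_i) = (−1)^{Σ_{i<j} q_{ij} x_i x_j} Q(⊕_i p_i x_i), where Q(u) = i^{W(u)} ⊗_k Y^{u_k}. -/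

import Mathlib

/-- The Pauli Y matrix `[[0, −i],[i, 0]]`. -/
noncomputable def pauliY : Matrix (Fin 2) (Fin 2) ℂ :=
  !![0, -Complex.I; Complex.I, 0]

/-- `Q(u) = i^{W(u)} ⊗_{k=1}^N Y^{u_k}` acting on `(ℂ^2)^{⊗N}`, realised as a
matrix indexed by `Fin N → Fin 2`; `W(u)` is the Hamming weight of `u`. -/
noncomputable def Qop (N : ℕ) (u : Fin N → ZMod 2) :
    Matrix (Fin N → Fin 2) (Fin N → Fin 2) ℂ :=
  (Complex.I ^ (Finset.univ.filter (fun k => u k ≠ 0)).card) •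
    Matrix.of (fun x y => ∏ k, (pauliY ^ (u k).val) (x k) (y k))

/-!
`Q` is a tensor product of the one-qubit operators `i^a Y^a`, and `(iY)^2 = -Y^2 = -1` gives the
one-qubit law `(i^a Y^a)(i^b Y^b) = (-1)^{ab} i^{a⊕b} Y^{a⊕b}`. Taking the tensor product yields
`Q(u) Q(v) = (-1)^{u·v} Q(u ⊕ v)`, and multiplying out `Π_i Q(x_i p_i)` from the left collects the
sign `(-1)^{Σ_{i<j} (x_i p_i)·(x_j p_j)}`, which is `(-1)^{Σ_{i<j} q_{ij} x_i x_j}` by `p_i · p_j = q_{ij}`.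
-/

open Finset

lemma pauliY_mul_self : pauliY * pauliY = 1 := by
  ext i j
  fin_cases i <;> fin_cases j <;>
    simp [pauliY, Matrix.mul_apply, Fin.sum_univ_two, Complex.I_mul_I]

lemma ZMod.neg_one_pow_val_add {R : Type*} [Ring R] (a b : ZMod 2) :
    (-1 : R) ^ (a + b).val = (-1) ^ a.val * (-1) ^ b.val := by
  rw [ZMod.val_add, ← neg_one_pow_eq_pow_mod_two, pow_add]

lemma ZMod.neg_one_pow_val_sum {R : Type*} [CommRing R] {ι : Type*}
    (s : Finset ι) (f : ι → ZMod 2) :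
    (-1 : R) ^ (∑ i ∈ s, f i).val = ∏ i ∈ s, (-1 : R) ^ (f i).val := by
  induction s using Finset.cons_induction with
  | empty => simp
  | cons i s hi ih => rw [sum_cons, prod_cons, ZMod.neg_one_pow_val_add, ih]

noncomputable def phasedPauliY (a : ZMod 2) : Matrix (Fin 2) (Fin 2) ℂ :=
  Complex.I ^ a.val • pauliY ^ a.val

lemma phasedPauliY_zero : phasedPauliY 0 = 1 := by simp [phasedPauliY]

lemma phasedPauliY_mul (a b : ZMod 2) :
    phasedPauliY a * phasedPauliY b = (-1 : ℂ) ^ (a * b).val • phasedPauliY (a + b) := by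
  obtain rfl | rfl : a = 0 ∨ a = 1 := by revert a; decide
  all_goals obtain rfl | rfl : b = 0 ∨ b = 1 := by revert b; decide
  all_goals simp [phasedPauliY, pauliY_mul_self, pow_succ, smul_smul, Complex.I_mul_I,
    ZMod.val_one, show (1 + 1 : ZMod 2) = 0 from rfl]

lemma Qop_eq_of_prod (N : ℕ) (u : Fin N → ZMod 2) :
    Qop N u = Matrix.of fun x y => ∏ k, phasedPauliY (u k) (x k) (y k) := by
  have hweight : #{k | u k ≠ 0} = ∑ k, (u k).val := by
    rw [card_filter]
    exact sum_congr rfl fun k _ => by generalize u k = a; fin_cases a <;> rfl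
  ext x y
  simp only [Qop, Matrix.smul_apply, Matrix.of_apply, smul_eq_mul, phasedPauliY, hweight,
    ← prod_pow_eq_pow_sum, ← prod_mul_distrib]

lemma Matrix.prod_one_apply {ι α : Type*} [Fintype ι] [DecidableEq α] (x y : ι → α) :
    ∏ k, (1 : Matrix α α ℂ) (x k) (y k) = (1 : Matrix (ι → α) (ι → α) ℂ) x y := by
  by_cases h : x = y
  · simp [h, Matrix.one_apply]
  · obtain ⟨k, hk⟩ := Function.ne_iff.mp h
    rw [Matrix.one_apply_ne h]
    exact prod_eq_zero (mem_univ k) (Matrix.one_apply_ne hk)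

lemma Qop_zero (N : ℕ) : Qop N 0 = 1 := by
  ext x y
  simp only [Qop_eq_of_prod, Matrix.of_apply, Pi.zero_apply, phasedPauliY_zero]
  exact Matrix.prod_one_apply x y

lemma Qop_mul (N : ℕ) (u v : Fin N → ZMod 2) :
    Qop N u * Qop N v = (-1 : ℂ) ^ (∑ k, u k * v k).val • Qop N (u + v) := by
  simp only [Qop_eq_of_prod]
  ext x y
  simp only [Matrix.mul_apply, Matrix.of_apply, Matrix.smul_apply, smul_eq_mul]
  calc ∑ z : Fin N → Fin 2, (∏ k, phasedPauliY (u k) (x k) (z k)) *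
          ∏ k, phasedPauliY (v k) (z k) (y k)
      = ∏ k, ∑ m : Fin 2, phasedPauliY (u k) (x k) m * phasedPauliY (v k) m (y k) := by
        rw [prod_univ_sum]
        simp [← prod_mul_distrib]
    _ = ∏ k, (phasedPauliY (u k) * phasedPauliY (v k)) (x k) (y k) := by
        simp [Matrix.mul_apply]
    _ = ∏ k, (-1 : ℂ) ^ (u k * v k).val * phasedPauliY ((u + v) k) (x k) (y k) := by
        simp [phasedPauliY_mul]
    _ = (-1 : ℂ) ^ (∑ k, u k * v k).val * ∏ k, phasedPauliY ((u + v) k) (x k) (y k) := by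
        rw [prod_mul_distrib, ZMod.neg_one_pow_val_sum]

lemma Fin.sum_sum_ite_lt_succ {M : Type*} [AddCommMonoid M] {n : ℕ} (f : Fin (n + 1) → Fin (n + 1) → M) :
    ∑ i, ∑ j, (if i < j then f i j else 0) =
      ∑ j : Fin n, f 0 j.succ + ∑ i : Fin n, ∑ j : Fin n, if i < j then f i.succ j.succ else 0 := by
  rw [Fin.sum_univ_succ]
  congr 1
  · simp [Fin.sum_univ_succ, Fin.succ_pos]
  · refine sum_congr rfl fun i _ => ?_
    simp [Fin.sum_univ_succ, Fin.succ_lt_succ_iff, (Fin.succ_pos i).not_gt]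

lemma Qop_list_prod (N n : ℕ) (u : Fin n → Fin N → ZMod 2) :
    (List.ofFn fun i => Qop N (u i)).prod =
      (-1 : ℂ) ^ (∑ i, ∑ j, if i < j then ∑ k, u i k * u j k else 0).val • Qop N (∑ i, u i) := by
  induction n with
  | zero => simp [Qop_zero]
  | succ n ih =>
    have hfirst : ∑ j : Fin n, ∑ k, u 0 k * u j.succ k = ∑ k, u 0 k * (∑ j : Fin n, u j.succ) k := by
      simp only [Finset.sum_apply, mul_sum]
      exact sum_comm
    rw [List.ofFn_succ, List.prod_cons, ih, Matrix.mul_smul, Qop_mul, Fin.sum_sum_ite_lt_succ, hfirst,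
      Fin.sum_univ_succ u, ZMod.neg_one_pow_val_add, smul_smul, mul_comm]

theorem Qop_product_quadratic_phase_general (n N : ℕ)
    (q : Fin n → Fin n → ZMod 2) (p : Fin n → (Fin N → ZMod 2))
    (hq : ∀ i j : Fin n, i < j → ∑ k, p i k * p j k = q i j)
    (x : Fin n → ZMod 2) :
    (∑ ij ∈ Finset.univ.filter (fun ij : Fin n × Fin n => ij.1 < ij.2),
        (∑ k, p ij.1 k * p ij.2 k) * x ij.1 * x ij.2 =
      ∑ ij ∈ Finset.univ.filter (fun ij : Fin n × Fin n => ij.1 < ij.2),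
        q ij.1 ij.2 * x ij.1 * x ij.2) ∧
    (List.ofFn (fun i : Fin n => Qop N (fun k => x i * p i k))).prod =
      ((-1 : ℂ) ^ (∑ ij ∈ Finset.univ.filter (fun ij : Fin n × Fin n => ij.1 < ij.2),
          q ij.1 ij.2 * x ij.1 * x ij.2).val) •
        Qop N (∑ i, fun k => x i * p i k) := by
  have hform : ∑ ij ∈ univ.filter (fun ij : Fin n × Fin n => ij.1 < ij.2),
      (∑ k, p ij.1 k * p ij.2 k) * x ij.1 * x ij.2 =
      ∑ ij ∈ univ.filter (fun ij : Fin n × Fin n => ij.1 < ij.2), q ij.1 ij.2 * x ij.1 * x ij.2 :=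
    sum_congr rfl fun ij hij => by rw [hq ij.1 ij.2 (mem_filter.mp hij).2]
  refine ⟨hform, ?_⟩
  rw [Qop_list_prod, ← hform, sum_filter, Fintype.sum_prod_type]
  congr 3
  refine sum_congr rfl fun i _ => sum_congr rfl fun j _ => ?_
  split_ifs
  · rw [sum_mul, sum_mul]
    exact sum_congr rfl fun k _ => by ring
  · rfl

/-- If `p_i · p_j = q_{ij} (mod 2)` for `i < j` and each `p_i` has even Hamming
weight, then for every `x ∈ Z_2^n` the quadratic forms agree,
`Σ_{i<j} (p_i·p_j) x_i x_j = Σ_{i<j} q_{ij} x_i x_j (mod 2)`, and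
`Π_i Q(p_i x_i) = (−1)^{Σ_{i<j} q_{ij} x_i x_j} Q(⊕_i p_i x_i)`. -/
theorem Qop_product_quadratic_phase (n N : ℕ)
    (q : Fin n → Fin n → ZMod 2) (p : Fin n → (Fin N → ZMod 2))
    (hq : ∀ i j : Fin n, i < j → ∑ k, p i k * p j k = q i j)
    (hw : ∀ i : Fin n, Even (Finset.univ.filter (fun k => p i k ≠ 0)).card)
    (x : Fin n → ZMod 2) :
    (∑ ij ∈ Finset.univ.filter (fun ij : Fin n × Fin n => ij.1 < ij.2),
        (∑ k, p ij.1 k * p ij.2 k) * x ij.1 * x ij.2 =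
      ∑ ij ∈ Finset.univ.filter (fun ij : Fin n × Fin n => ij.1 < ij.2),
        q ij.1 ij.2 * x ij.1 * x ij.2) ∧
    (List.ofFn (fun i : Fin n => Qop N (fun k => x i * p i k))).prod =
      ((-1 : ℂ) ^ (∑ ij ∈ Finset.univ.filter (fun ij : Fin n × Fin n => ij.1 < ij.2),
          q ij.1 ij.2 * x ij.1 * x ij.2).val) •
        Qop N (∑ i, fun k => x i * p i k) :=
  Qop_product_quadratic_phase_general n N q p hq x
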